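/- arXiv:2603.16929 — 2 statements merged into one kernel-verified Lean document; each statement's English description precedes it below -/
import Mathlib

section
/- For c > 0, the supremum over r > 0 of the gradient multiplier exp(ψ(r))·sech²(log(r)/c) equals M_ψ(c) = (2/(1+√(1+c²)))·exp(c²/(1+√(1+c²))), where ψ(r) = c·tanh(log(r)/c). -/
/-!
Substituting `t = tanh (log r / c)`, which ranges over `(-1, 1)` as `r` ranges over `(0, ∞)`, turns
the multiplier into `g t = exp (c t) (1 - t²)`. At the root `t₀ = c / (1 + √(1 + c²))` of
`c (1 - t²) = 2 t` in `(-1, 1)`, the concave factor `1 - t²` lies below its tangent line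
`(1 - t₀²)(1 - c (t - t₀))`, and `1 - c (t - t₀) ≤ exp (c (t₀ - t))`; multiplying by `exp (c t)`
gives `g t ≤ g t₀` for every real `t`.
-/

open Real Set

theorem Real.one_div_cosh_sq (x : ℝ) : (1 / cosh x) ^ 2 = 1 - tanh x ^ 2 := by
  have := cosh_pos x
  rw [tanh_eq_sinh_div_cosh]
  field_simp
  linarith [cosh_sq x]

theorem Real.image_tanh_log_div_Ioi {c : ℝ} (hc : c ≠ 0) :
    (fun r => tanh (log r / c)) '' Ioi 0 = Ioo (-1) 1 := by
  ext t
  constructor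
  · rintro ⟨r, -, rfl⟩
    exact ⟨neg_one_lt_tanh _, tanh_lt_one _⟩
  · intro ht
    refine ⟨exp (c * artanh t), exp_pos _, ?_⟩
    show tanh (log (exp _) / c) = t
    rw [log_exp, mul_div_cancel_left₀ _ hc, tanh_artanh ht]

theorem exp_mul_mul_one_sub_sq_le {c t₀ : ℝ} (ht₀ : t₀ ^ 2 ≤ 1)
    (hcrit : c * (1 - t₀ ^ 2) = 2 * t₀) (t : ℝ) :
    exp (c * t) * (1 - t ^ 2) ≤ exp (c * t₀) * (1 - t₀ ^ 2) := by
  have tangent : 1 - t ^ 2 ≤ (1 - t₀ ^ 2) * (1 - c * (t - t₀)) := by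
    have : (1 - t₀ ^ 2) * (1 - c * (t - t₀)) = 1 - t ^ 2 + (t - t₀) ^ 2 := by
      linear_combination (t₀ - t) * hcrit
    linarith [sq_nonneg (t - t₀)]
  have linear_le_exp : (1 - t₀ ^ 2) * (1 - c * (t - t₀)) ≤ (1 - t₀ ^ 2) * exp (c * (t₀ - t)) :=
    mul_le_mul_of_nonneg_left (by linarith [add_one_le_exp (c * (t₀ - t))]) (by linarith)
  calc exp (c * t) * (1 - t ^ 2)
      ≤ exp (c * t) * ((1 - t₀ ^ 2) * exp (c * (t₀ - t))) :=
        mul_le_mul_of_nonneg_left (tangent.trans linear_le_exp) (exp_pos _).le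
    _ = exp (c * t₀) * (1 - t₀ ^ 2) := by
        rw [mul_left_comm, ← exp_add]
        ring_nf

theorem isGreatest_image_exp_mul_one_sub_sq (c : ℝ) :
    IsGreatest ((fun t => exp (c * t) * (1 - t ^ 2)) '' Ioo (-1) 1)
      (2 / (1 + √(1 + c ^ 2)) * exp (c ^ 2 / (1 + √(1 + c ^ 2)))) := by
  set s := √(1 + c ^ 2)
  have hs : s ^ 2 = 1 + c ^ 2 := sq_sqrt (by positivity)
  have hs_pos : 0 < 1 + s := by positivity
  set t₀ := c / (1 + s)
  have one_sub_sq : 1 - t₀ ^ 2 = 2 / (1 + s) := by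
    rw [div_pow]
    field_simp
    linear_combination hs
  have ht₀ : t₀ ^ 2 < 1 := by
    have : 0 < 2 / (1 + s) := by positivity
    linarith
  have value : exp (c * t₀) * (1 - t₀ ^ 2) = 2 / (1 + s) * exp (c ^ 2 / (1 + s)) := by
    rw [one_sub_sq, mul_comm, mul_div_assoc', sq]
  refine ⟨⟨t₀, abs_lt.mp ((sq_lt_one_iff_abs_lt_one t₀).mp ht₀), value⟩, ?_⟩
  rintro _ ⟨t, -, rfl⟩
  rw [← value]
  refine exp_mul_mul_one_sub_sq_le ht₀.le ?_ t
  rw [one_sub_sq]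
  ring

theorem stmt_6 (c : ℝ) (hc : 0 < c) :
    IsLUB ((fun r : ℝ =>
        Real.exp (c * Real.tanh (Real.log r / c)) * (1 / Real.cosh (Real.log r / c)) ^ 2) ''
        Set.Ioi 0)
      (2 / (1 + Real.sqrt (1 + c ^ 2)) *
        Real.exp (c ^ 2 / (1 + Real.sqrt (1 + c ^ 2)))) := by
  have substitution : (fun r : ℝ => exp (c * tanh (log r / c)) * (1 / cosh (log r / c)) ^ 2) =
      (fun t => exp (c * t) * (1 - t ^ 2)) ∘ fun r => tanh (log r / c) := by
    funext r
    simp only [Function.comp, one_div_cosh_sq]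
  rw [substitution, image_comp, image_tanh_log_div_Ioi hc.ne']
  exact (isGreatest_image_exp_mul_one_sub_sq c).isLUB
end

section
/- For all real x, |tanh(x) − x| ≤ |x|³/3. -/
open Real intervalIntegral

lemma hasDerivAt_tanh' (t : ℝ) : HasDerivAt Real.tanh (1 / Real.cosh t ^ 2) t := by
  have h := (Real.hasDerivAt_sinh t).div (Real.hasDerivAt_cosh t) (Real.cosh_pos t).ne'
  have key : (Real.cosh t * Real.cosh t - Real.sinh t * Real.sinh t) / Real.cosh t ^ 2
      = 1 / Real.cosh t ^ 2 := by
    have := Real.cosh_sq_sub_sinh_sq t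
    rw [show Real.cosh t * Real.cosh t - Real.sinh t * Real.sinh t
        = Real.cosh t ^ 2 - Real.sinh t ^ 2 by ring, this]
  have heq : Real.tanh = fun t => Real.sinh t / Real.cosh t := by
    funext s; exact Real.tanh_eq_sinh_div_cosh s
  rw [heq]
  rw [key] at h
  exact h

lemma abs_tanh_le (t : ℝ) : |Real.tanh t| ≤ |t| := by
  have := Convex.norm_image_sub_le_of_norm_hasDerivWithin_le
    (f := Real.tanh) (f' := fun s => 1 / Real.cosh s ^ 2) (C := 1) (s := Set.univ)
    (fun s _ => (hasDerivAt_tanh' s).hasDerivWithinAt)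
    (fun s _ => by
      rw [Real.norm_eq_abs, abs_of_pos (by positivity)]
      rw [div_le_one (by positivity)]
      nlinarith [Real.one_le_cosh s])
    convex_univ (Set.mem_univ 0) (Set.mem_univ t)
  simpa [Real.tanh_zero] using this

lemma tanh_sub_nonneg (x : ℝ) (hx : 0 ≤ x) : |Real.tanh x - x| ≤ |x| ^ 3 / 3 := by
  have hderiv : ∀ t ∈ Set.uIcc 0 x, HasDerivAt (fun s => Real.tanh s - s)
      (1 / Real.cosh t ^ 2 - 1) t := fun t _ => (hasDerivAt_tanh' t).sub (hasDerivAt_id t)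
  have hcont : ContinuousOn (fun t => 1 / Real.cosh t ^ 2 - 1) (Set.uIcc 0 x) := by
    apply ContinuousOn.sub _ continuousOn_const
    exact (continuousOn_const.div (Real.continuous_cosh.pow 2).continuousOn
      (fun t _ => by positivity))
  have hInt : IntervalIntegrable (fun t => 1 / Real.cosh t ^ 2 - 1) MeasureTheory.volume 0 x :=
    hcont.intervalIntegrable
  have hftc := intervalIntegral.integral_eq_sub_of_hasDerivAt hderiv hInt
  simp only [Real.tanh_zero, sub_zero] at hftc
  rw [← hftc]
  have hbound : ∀ t ∈ Set.Icc (0:ℝ) x, |1 / Real.cosh t ^ 2 - 1| ≤ t ^ 2 := by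
    intro t ht
    have h1 : 1 / Real.cosh t ^ 2 - 1 = -(Real.tanh t ^ 2) := by
      rw [Real.tanh_eq_sinh_div_cosh, div_pow]
      have hc : Real.cosh t ^ 2 ≠ 0 := by positivity
      field_simp
      nlinarith [Real.cosh_sq_sub_sinh_sq t]
    rw [h1, abs_neg, abs_of_nonneg (by positivity)]
    have := abs_tanh_le t
    calc Real.tanh t ^ 2 = |Real.tanh t| ^ 2 := (sq_abs _).symm
      _ ≤ |t| ^ 2 := by gcongr
      _ = t ^ 2 := sq_abs t
  calc |∫ t in (0:ℝ)..x, (1 / Real.cosh t ^ 2 - 1)|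
      ≤ ∫ t in (0:ℝ)..x, t ^ 2 := by
        refine (intervalIntegral.abs_integral_le_integral_abs hx).trans ?_
        apply intervalIntegral.integral_mono_on hx (hInt.abs) (by
          exact (continuous_pow 2).intervalIntegrable 0 x)
        exact hbound
    _ = x ^ 3 / 3 := by
        rw [integral_pow]; norm_num
    _ = |x| ^ 3 / 3 := by rw [abs_of_nonneg hx]

theorem stmt_16 (x : ℝ) : |Real.tanh x - x| ≤ |x| ^ 3 / 3 := by
  rcases le_or_gt 0 x with hx | hx
  · exact tanh_sub_nonneg x hx
  · have := tanh_sub_nonneg (-x) (by linarith)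
    rw [Real.tanh_neg, abs_neg] at this
    calc |Real.tanh x - x| = |-Real.tanh x - -x| := by rw [← abs_neg]; ring_nf
      _ ≤ |x| ^ 3 / 3 := this
end
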